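/- Let λ₁, λ₂ > 0, let Ω ⊂ ℝ⁴ be a bounded domain, and let v₁, v₂ : ℝ⁴ → (0, ∞) satisfy the two-sided bounds c_δ e^{-(1+δ)√λᵢ|x|} ≤ vᵢ(x) ≤ C_δ e^{-(1-δ)√λᵢ|x|} for every δ ∈ (0,1) and large |x|. For P₁ ≠ P₂ define I_ε[P₁,P₂] = ∫_{ℝ⁴} v₁((x-P₁)/ε)² v₂((x-P₂)/ε)² dx. Then for every σ ∈ (0,1) there exist constants c, C > 0 such that for all small ε > 0, c·e^{-(2(1+σ)/ε)·min{√λ₁, √λ₂}|P₁-P₂|} ≤ ε^{-4} I_ε[P₁,P₂] ≤ C·e^{-(2(1-σ)/ε)·min{√λ₁, √λ₂}|P₁-P₂|}. -/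

import Mathlib

/-!
The substitution `y = (x - P₁)/ε` turns `ε⁻⁴ I_ε[P₁,P₂]` into `J(q) = ∫ v₁(y)² v₂(y - q)² dy`
with `|q| = |P₁ - P₂|/ε`, and continuity plus positivity make the exponential bounds on `vᵢ`
global, so `vᵢ²` decays like `e^{-2kᵢ|y|}` up to a factor `1 ± δ` in the rate (`kᵢ = √λᵢ`).
For the upper bound, with `m = min k₁ k₂` and `0 ≤ s < m`, the triangle inequality gives
`k₁|y| + k₂|y - q| ≥ s|q| + (m - s)|y|`, and `e^{-(m - s)|y|}` is integrable.
For the lower bound, integrate over the unit ball centred at `q` if `k₁ ≤ k₂` and at `0`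
otherwise: there the integrand is at least a constant times `e^{-2(1+δ) m |q|}`.
-/

open MeasureTheory Real Metric Filter

section ExpBounds

variable {E : Type*} [NormedAddCommGroup E]

def HasExpBounds (f : E → ℝ) (a b : ℝ) : Prop :=
  ∃ c C : ℝ, 0 < c ∧ 0 < C ∧ ∀ x, c * exp (-a * ‖x‖) ≤ f x ∧ f x ≤ C * exp (-b * ‖x‖)

lemma mul_exp_neg_mul_le_iff {c y a t : ℝ} : c * exp (-a * t) ≤ y ↔ c ≤ y * exp (a * t) := by
  rw [neg_mul, exp_neg, ← div_eq_mul_inv, div_le_iff₀ (exp_pos _)]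

lemma le_mul_exp_neg_mul_iff {C y b t : ℝ} : y ≤ C * exp (-b * t) ↔ y * exp (b * t) ≤ C := by
  rw [neg_mul, exp_neg, ← div_eq_mul_inv, le_div_iff₀ (exp_pos _)]

lemma exp_neg_mul_norm_mul_exp_neg_mul_norm_sub_le {b₁ b₂ s : ℝ} (hs : 0 ≤ s)
    (hsb : s ≤ min b₁ b₂) (y q : E) :
    exp (-b₁ * ‖y‖) * exp (-b₂ * ‖y - q‖) ≤ exp (-s * ‖q‖) * exp (-(min b₁ b₂ - s) * ‖y‖) := by
  rw [← exp_add, ← exp_add, exp_le_exp]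
  have htri : ‖q‖ ≤ ‖y‖ + ‖y - q‖ := by simpa using norm_sub_le y (y - q)
  nlinarith [min_le_left b₁ b₂, min_le_right b₁ b₂, norm_nonneg y, norm_nonneg (y - q)]

namespace HasExpBounds

variable {f g : E → ℝ} {a b a₁ b₁ a₂ b₂ : ℝ}

lemma pos (hf : HasExpBounds f a b) (x : E) : 0 < f x := by
  obtain ⟨c, _, hc, _, h⟩ := hf
  exact (mul_pos hc (exp_pos _)).trans_le (h x).1

lemma sq (hf : HasExpBounds f a b) : HasExpBounds (fun x => f x ^ 2) (2 * a) (2 * b) := by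
  obtain ⟨c, C, hc, hC, h⟩ := hf
  have hsq (k r t : ℝ) : (k * exp (-r * t)) ^ 2 = k ^ 2 * exp (-(2 * r) * t) := by
    rw [mul_pow, ← exp_nat_mul]; ring_nf
  refine ⟨c ^ 2, C ^ 2, by positivity, by positivity, fun x => ⟨?_, ?_⟩⟩
  · rw [← hsq]
    exact pow_le_pow_left₀ (by positivity) (h x).1 2
  · rw [← hsq]
    exact pow_le_pow_left₀ ((mul_pos hc (exp_pos _)).le.trans (h x).1) (h x).2 2

/-- The extreme value theorem applies to `min (f x * e^{a‖x‖}) c` and `max (f x * e^{b‖x‖}) C`,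
which are constant away from a compact set. -/
lemma of_norm_ge [ProperSpace E] (hf : Continuous f) (hpos : ∀ x, 0 < f x)
    (h : ∃ c C R : ℝ, 0 < c ∧ 0 < C ∧ ∀ x : E, R ≤ ‖x‖ →
      c * exp (-a * ‖x‖) ≤ f x ∧ f x ≤ C * exp (-b * ‖x‖)) :
    HasExpBounds f a b := by
  obtain ⟨c, C, R, hc, hC, h⟩ := h
  have hfar : ∀ᶠ x in cocompact E, R ≤ ‖x‖ := tendsto_norm_cocompact_atTop.eventually_ge_atTop R
  set u : E → ℝ := fun x => min (f x * exp (a * ‖x‖)) c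
  set w : E → ℝ := fun x => max (f x * exp (b * ‖x‖)) C
  obtain ⟨x₁, hx₁⟩ := (show Continuous u by fun_prop).exists_forall_le' 0 <| hfar.mono
    fun x hx => by simp only [u, min_eq_right (mul_exp_neg_mul_le_iff.1 (h x hx).1), min_le_right]
  obtain ⟨x₂, hx₂⟩ := (show Continuous w by fun_prop).exists_forall_ge' 0 <| hfar.mono
    fun x hx => by simp only [w, max_eq_right (le_mul_exp_neg_mul_iff.1 (h x hx).2), le_max_right]
  refine ⟨u x₁, w x₂, lt_min (by have := hpos x₁; positivity) hc, lt_max_of_lt_right hC,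
    fun x => ⟨?_, ?_⟩⟩
  · exact mul_exp_neg_mul_le_iff.2 ((hx₁ x).trans (min_le_left _ _))
  · exact le_mul_exp_neg_mul_iff.2 ((le_max_left _ _).trans (hx₂ x))

lemma exists_mul_comp_sub_le (hf : HasExpBounds f a₁ b₁) (hg : HasExpBounds g a₂ b₂) :
    ∃ C, 0 < C ∧ ∀ s, 0 ≤ s → s ≤ min b₁ b₂ → ∀ q y : E,
      f y * g (y - q) ≤ C * exp (-s * ‖q‖) * exp (-(min b₁ b₂ - s) * ‖y‖) := by
  obtain ⟨_, C₁, _, hC₁, h₁⟩ := hf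
  obtain ⟨c₂, C₂, hc₂, hC₂, h₂⟩ := hg
  refine ⟨C₁ * C₂, by positivity, fun s hs hsb q y => ?_⟩
  calc f y * g (y - q) ≤ C₁ * exp (-b₁ * ‖y‖) * (C₂ * exp (-b₂ * ‖y - q‖)) :=
        mul_le_mul (h₁ y).2 (h₂ (y - q)).2 ((mul_pos hc₂ (exp_pos _)).le.trans (h₂ _).1)
          (by positivity)
    _ = C₁ * C₂ * (exp (-b₁ * ‖y‖) * exp (-b₂ * ‖y - q‖)) := by ring
    _ ≤ C₁ * C₂ * (exp (-s * ‖q‖) * exp (-(min b₁ b₂ - s) * ‖y‖)) := by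
        gcongr C₁ * C₂ * ?_
        exact exp_neg_mul_norm_mul_exp_neg_mul_norm_sub_le hs hsb y q
    _ = _ := by ring

lemma exists_le_mul_comp_sub_of_mem_ball (hf : HasExpBounds f a₁ b₁) (hg : HasExpBounds g a₂ b₂)
    (ha₁ : 0 ≤ a₁) (ha₂ : 0 ≤ a₂) :
    ∃ c, 0 < c ∧ ∀ p q y : E, y ∈ ball p 1 →
      c * exp (-(a₁ * ‖p‖ + a₂ * ‖p - q‖)) ≤ f y * g (y - q) := by
  obtain ⟨c₁, _, hc₁, _, h₁⟩ := hf
  obtain ⟨c₂, _, hc₂, _, h₂⟩ := hg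
  refine ⟨c₁ * c₂ * exp (-(a₁ + a₂)), by positivity, fun p q y hy => ?_⟩
  have hyp : ‖y - p‖ < 1 := by rwa [← dist_eq_norm]
  have hy : ‖y‖ ≤ ‖p‖ + 1 := by linarith [norm_le_insert' y p]
  have hyq : ‖y - q‖ ≤ ‖p - q‖ + 1 := by
    linarith [norm_sub_le_norm_sub_add_norm_sub y p q]
  calc c₁ * c₂ * exp (-(a₁ + a₂)) * exp (-(a₁ * ‖p‖ + a₂ * ‖p - q‖))
      = c₁ * exp (-a₁ * (‖p‖ + 1)) * (c₂ * exp (-a₂ * (‖p - q‖ + 1))) := by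
        rw [mul_assoc, ← exp_add, mul_mul_mul_comm, ← exp_add]
        ring_nf
    _ ≤ c₁ * exp (-a₁ * ‖y‖) * (c₂ * exp (-a₂ * ‖y - q‖)) := by
        gcongr c₁ * exp ?_ * (c₂ * exp ?_) <;> nlinarith
    _ ≤ f y * g (y - q) :=
        mul_le_mul (h₁ y).1 (h₂ (y - q)).1 (by positivity)
          ((mul_pos hc₁ (exp_pos _)).le.trans (h₁ y).1)

end HasExpBounds

end ExpBounds

section Integrals

variable {E : Type*} [NormedAddCommGroup E] [NormedSpace ℝ E] [FiniteDimensional ℝ E]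
  [MeasurableSpace E] [BorelSpace E] {μ : Measure E} [μ.IsAddHaarMeasure]

/-- Comparison with `(1 + ‖x‖)^{-(d+1)}` through `t^n / n! ≤ e^t`. -/
lemma integrable_exp_neg_mul_norm {a : ℝ} (ha : 0 < a) :
    Integrable (fun x : E => exp (-a * ‖x‖)) μ := by
  set n := Module.finrank ℝ E + 1
  refine ((integrable_one_add_norm (μ := μ) (r := n) (by simp [n])).const_mul
    (exp a * n.factorial / a ^ n)).mono' (by fun_prop) (ae_of_all _ fun x => ?_)
  have hx : 0 < 1 + ‖x‖ := by positivity
  rw [norm_of_nonneg (exp_pos _).le, rpow_neg hx.le, rpow_natCast]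
  calc exp (-a * ‖x‖) = exp a / exp (a * (1 + ‖x‖)) := by rw [← exp_sub]; ring_nf
    _ ≤ exp a / ((a * (1 + ‖x‖)) ^ n / n.factorial) :=
        div_le_div_of_nonneg_left (exp_pos a).le (by positivity)
          (pow_div_factorial_le_exp _ (by positivity) n)
    _ = exp a * n.factorial / a ^ n * ((1 + ‖x‖) ^ n)⁻¹ := by
        rw [mul_pow]; field_simp

namespace HasExpBounds

variable {f g : E → ℝ} {a₁ b₁ a₂ b₂ : ℝ}

lemma integrable_mul_comp_sub (hf : HasExpBounds f a₁ b₁) (hg : HasExpBounds g a₂ b₂)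
    (hfm : Measurable f) (hgm : Measurable g) (hb : 0 < min b₁ b₂) (q : E) :
    Integrable (fun y => f y * g (y - q)) μ := by
  obtain ⟨C, -, hC⟩ := hf.exists_mul_comp_sub_le hg
  refine ((integrable_exp_neg_mul_norm (μ := μ) (sub_pos.2 hb)).const_mul
    (C * exp (-0 * ‖q‖))).mono' (hfm.mul (hgm.comp (measurable_sub_const q))).aestronglyMeasurable
    (ae_of_all _ fun y => ?_)
  rw [norm_of_nonneg (mul_pos (hf.pos y) (hg.pos _)).le]
  exact hC 0 le_rfl hb.le q y

lemma integral_mul_comp_sub_le (hf : HasExpBounds f a₁ b₁) (hg : HasExpBounds g a₂ b₂)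
    {s : ℝ} (hs : 0 ≤ s) (hsb : s < min b₁ b₂) :
    ∃ C, 0 < C ∧ ∀ q : E, ∫ y, f y * g (y - q) ∂μ ≤ C * exp (-s * ‖q‖) := by
  obtain ⟨C, hC, hle⟩ := hf.exists_mul_comp_sub_le hg
  have hint := integrable_exp_neg_mul_norm (μ := μ) (sub_pos.2 hsb)
  set K := ∫ y, exp (-(min b₁ b₂ - s) * ‖y‖) ∂μ
  refine ⟨C * K, mul_pos hC (integral_exp_pos hint), fun q => ?_⟩
  calc ∫ y, f y * g (y - q) ∂μ
      ≤ ∫ y, C * exp (-s * ‖q‖) * exp (-(min b₁ b₂ - s) * ‖y‖) ∂μ :=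
        integral_mono_of_nonneg (ae_of_all _ fun y => (mul_pos (hf.pos y) (hg.pos _)).le)
          (hint.const_mul _) (ae_of_all _ (hle s hs hsb.le q))
    _ = C * K * exp (-s * ‖q‖) := by rw [integral_const_mul]; ring

lemma le_integral_mul_comp_sub (hf : HasExpBounds f a₁ b₁) (hg : HasExpBounds g a₂ b₂)
    (hfm : Measurable f) (hgm : Measurable g) (ha₁ : 0 ≤ a₁) (ha₂ : 0 ≤ a₂)
    (hb : 0 < min b₁ b₂) {s : ℝ} (hs : min a₁ a₂ ≤ s) :
    ∃ c, 0 < c ∧ ∀ q : E, c * exp (-s * ‖q‖) ≤ ∫ y, f y * g (y - q) ∂μ := by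
  obtain ⟨c, hc, hball⟩ := hf.exists_le_mul_comp_sub_of_mem_ball hg ha₁ ha₂
  have hV : 0 < μ.real (ball 0 1) :=
    ENNReal.toReal_pos (measure_ball_pos μ 0 one_pos).ne' measure_ball_lt_top.ne
  refine ⟨c * μ.real (ball 0 1), mul_pos hc hV, fun q => ?_⟩
  -- centre the unit ball at the profile with the slower decay
  obtain ⟨p, hp⟩ : ∃ p : E, a₁ * ‖p‖ + a₂ * ‖p - q‖ ≤ s * ‖q‖ := by
    rcases le_total a₁ a₂ with h | h
    · exact ⟨q, by simpa [min_eq_left h] using mul_le_mul_of_nonneg_right hs (norm_nonneg q)⟩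
    · exact ⟨0, by simpa [min_eq_right h] using mul_le_mul_of_nonneg_right hs (norm_nonneg q)⟩
  have hint := hf.integrable_mul_comp_sub (μ := μ) hg hfm hgm hb q
  calc c * μ.real (ball 0 1) * exp (-s * ‖q‖)
      ≤ c * μ.real (ball 0 1) * exp (-(a₁ * ‖p‖ + a₂ * ‖p - q‖)) := by
        gcongr; linarith
    _ = c * exp (-(a₁ * ‖p‖ + a₂ * ‖p - q‖)) * μ.real (ball p 1) := by
        rw [Measure.addHaar_real_ball_center μ p]; ring
    _ ≤ ∫ y in ball p 1, f y * g (y - q) ∂μ :=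
        setIntegral_ge_of_const_le_real measurableSet_ball measure_ball_lt_top.ne
          (hball p q) hint.integrableOn
    _ ≤ ∫ y, f y * g (y - q) ∂μ :=
        setIntegral_le_integral hint (ae_of_all _ fun y => (mul_pos (hf.pos y) (hg.pos _)).le)

end HasExpBounds

lemma integral_mul_comp_inv_smul_sub (f g : E → ℝ) (P₁ P₂ : E) {ε : ℝ} (hε : 0 ≤ ε) :
    ∫ x, f (ε⁻¹ • (x - P₁)) * g (ε⁻¹ • (x - P₂)) ∂μ =
      ε ^ Module.finrank ℝ E * ∫ y, f y * g (y - ε⁻¹ • (P₂ - P₁)) ∂μ := by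
  have h (x : E) : ε⁻¹ • (x - P₂) = ε⁻¹ • (x - P₁) - ε⁻¹ • (P₂ - P₁) := by
    rw [← smul_sub, sub_sub_sub_cancel_right]
  simp_rw [h]
  rw [integral_sub_right_eq_self (fun z => f (ε⁻¹ • z) * g (ε⁻¹ • z - ε⁻¹ • (P₂ - P₁))),
    Measure.integral_comp_inv_smul_of_nonneg μ (fun y => f y * g (y - ε⁻¹ • (P₂ - P₁))) hε,
    smul_eq_mul]

end Integrals

theorem stmt_15_general
    (l₁ l₂ : ℝ) (hl₁ : 0 < l₁) (hl₂ : 0 < l₂)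
    (v₁ v₂ : EuclideanSpace ℝ (Fin 4) → ℝ)
    (hcont₁ : Continuous v₁) (hcont₂ : Continuous v₂)
    (hpos₁ : ∀ x, 0 < v₁ x) (hpos₂ : ∀ x, 0 < v₂ x)
    (hdec₁ : ∀ δ : ℝ, 0 < δ → δ < 1 → ∃ c C R : ℝ, 0 < c ∧ 0 < C ∧
      ∀ x : EuclideanSpace ℝ (Fin 4), R ≤ ‖x‖ →
        c * Real.exp (-(1 + δ) * Real.sqrt l₁ * ‖x‖) ≤ v₁ x ∧
        v₁ x ≤ C * Real.exp (-(1 - δ) * Real.sqrt l₁ * ‖x‖))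
    (hdec₂ : ∀ δ : ℝ, 0 < δ → δ < 1 → ∃ c C R : ℝ, 0 < c ∧ 0 < C ∧
      ∀ x : EuclideanSpace ℝ (Fin 4), R ≤ ‖x‖ →
        c * Real.exp (-(1 + δ) * Real.sqrt l₂ * ‖x‖) ≤ v₂ x ∧
        v₂ x ≤ C * Real.exp (-(1 - δ) * Real.sqrt l₂ * ‖x‖))
    (P₁ P₂ : EuclideanSpace ℝ (Fin 4)) :
    ∀ σ : ℝ, 0 < σ → σ < 1 →
      ∃ c C ε₀ : ℝ, 0 < c ∧ 0 < C ∧ 0 < ε₀ ∧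
        ∀ ε : ℝ, 0 < ε → ε < ε₀ →
          c * Real.exp (-(2 * (1 + σ) / ε) *
              min (Real.sqrt l₁) (Real.sqrt l₂) * dist P₁ P₂) ≤
            (ε ^ 4)⁻¹ *
              ∫ x, (v₁ (ε⁻¹ • (x - P₁))) ^ 2 * (v₂ (ε⁻¹ • (x - P₂))) ^ 2 ∧
          (ε ^ 4)⁻¹ *
              (∫ x, (v₁ (ε⁻¹ • (x - P₁))) ^ 2 * (v₂ (ε⁻¹ • (x - P₂))) ^ 2) ≤
            C * Real.exp (-(2 * (1 - σ) / ε) *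
              min (Real.sqrt l₁) (Real.sqrt l₂) * dist P₁ P₂) := by
  intro σ hσ0 hσ1
  have hδ0 : 0 < σ / 2 := by positivity
  have hδ1 : σ / 2 < 1 := by linarith
  have hk₁ := Real.sqrt_pos.2 hl₁
  have hk₂ := Real.sqrt_pos.2 hl₂
  have hm := lt_min hk₁ hk₂
  have hv₁ := (HasExpBounds.of_norm_ge hcont₁ hpos₁ (a := (1 + σ / 2) * √l₁)
    (b := (1 - σ / 2) * √l₁) (by simpa only [neg_mul] using hdec₁ _ hδ0 hδ1)).sq
  have hv₂ := (HasExpBounds.of_norm_ge hcont₂ hpos₂ (a := (1 + σ / 2) * √l₂)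
    (b := (1 - σ / 2) * √l₂) (by simpa only [neg_mul] using hdec₂ _ hδ0 hδ1)).sq
  simp only [← mul_assoc] at hv₁ hv₂
  obtain ⟨c, hc, hlow⟩ := hv₁.le_integral_mul_comp_sub (μ := volume) hv₂ (by fun_prop)
    (by fun_prop) (by positivity) (by positivity)
    (by rw [← mul_min_of_nonneg _ _ (by positivity)]; nlinarith)
    (s := 2 * (1 + σ) * min √l₁ √l₂) (by rw [← mul_min_of_nonneg _ _ (by positivity)]; nlinarith)
  obtain ⟨C, hC, hup⟩ := hv₁.integral_mul_comp_sub_le (μ := volume) hv₂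
    (s := 2 * (1 - σ) * min √l₁ √l₂) (by nlinarith)
    (by rw [← mul_min_of_nonneg _ _ (by positivity)]; nlinarith)
  refine ⟨c, C, 1, hc, hC, one_pos, fun ε hε _ => ?_⟩
  have hq : ‖ε⁻¹ • (P₂ - P₁)‖ = ε⁻¹ * dist P₁ P₂ := by
    rw [norm_smul, norm_inv, norm_of_nonneg hε.le, dist_comm, dist_eq_norm]
  have hrate (r : ℝ) : -(r / ε) * min √l₁ √l₂ * dist P₁ P₂ =
      -(r * min √l₁ √l₂) * ‖ε⁻¹ • (P₂ - P₁)‖ := by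
    rw [hq]; ring
  rw [integral_mul_comp_inv_smul_sub (fun y => v₁ y ^ 2) (fun y => v₂ y ^ 2) P₁ P₂ hε.le,
    finrank_euclideanSpace_fin, inv_mul_cancel_left₀ (by positivity), hrate, hrate]
  exact ⟨hlow _, hup _⟩

/-- interaction estimate between two exponentially decaying profiles.
If v₁, v₂ > 0 satisfy two-sided exponential bounds at rates √λ₁, √λ₂, then
I_ε[P₁,P₂] = ∫ v₁((x-P₁)/ε)² v₂((x-P₂)/ε)² satisfies, for each σ ∈ (0,1),
c e^{-2(1+σ)min{√λ₁,√λ₂}|P₁-P₂|/ε} ≤ ε⁻⁴I_ε ≤ C e^{-2(1-σ)min{√λ₁,√λ₂}|P₁-P₂|/ε}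
for small ε. -/
theorem stmt_15 (Ω : Set (EuclideanSpace ℝ (Fin 4))) (hbdd : Bornology.IsBounded Ω)
    (l₁ l₂ : ℝ) (hl₁ : 0 < l₁) (hl₂ : 0 < l₂)
    (v₁ v₂ : EuclideanSpace ℝ (Fin 4) → ℝ)
    (hcont₁ : Continuous v₁) (hcont₂ : Continuous v₂)
    (hpos₁ : ∀ x, 0 < v₁ x) (hpos₂ : ∀ x, 0 < v₂ x)
    (hdec₁ : ∀ δ : ℝ, 0 < δ → δ < 1 → ∃ c C R : ℝ, 0 < c ∧ 0 < C ∧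
      ∀ x : EuclideanSpace ℝ (Fin 4), R ≤ ‖x‖ →
        c * Real.exp (-(1 + δ) * Real.sqrt l₁ * ‖x‖) ≤ v₁ x ∧
        v₁ x ≤ C * Real.exp (-(1 - δ) * Real.sqrt l₁ * ‖x‖))
    (hdec₂ : ∀ δ : ℝ, 0 < δ → δ < 1 → ∃ c C R : ℝ, 0 < c ∧ 0 < C ∧
      ∀ x : EuclideanSpace ℝ (Fin 4), R ≤ ‖x‖ →
        c * Real.exp (-(1 + δ) * Real.sqrt l₂ * ‖x‖) ≤ v₂ x ∧
        v₂ x ≤ C * Real.exp (-(1 - δ) * Real.sqrt l₂ * ‖x‖))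
    (P₁ P₂ : EuclideanSpace ℝ (Fin 4)) (hP₁ : P₁ ∈ Ω) (hP₂ : P₂ ∈ Ω)
    (hPne : P₁ ≠ P₂) :
    ∀ σ : ℝ, 0 < σ → σ < 1 →
      ∃ c C ε₀ : ℝ, 0 < c ∧ 0 < C ∧ 0 < ε₀ ∧
        ∀ ε : ℝ, 0 < ε → ε < ε₀ →
          c * Real.exp (-(2 * (1 + σ) / ε) *
              min (Real.sqrt l₁) (Real.sqrt l₂) * dist P₁ P₂) ≤
            (ε ^ 4)⁻¹ *
              ∫ x, (v₁ (ε⁻¹ • (x - P₁))) ^ 2 * (v₂ (ε⁻¹ • (x - P₂))) ^ 2 ∧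
          (ε ^ 4)⁻¹ *
              (∫ x, (v₁ (ε⁻¹ • (x - P₁))) ^ 2 * (v₂ (ε⁻¹ • (x - P₂))) ^ 2) ≤
            C * Real.exp (-(2 * (1 - σ) / ε) *
              min (Real.sqrt l₁) (Real.sqrt l₂) * dist P₁ P₂) :=
  stmt_15_general l₁ l₂ hl₁ hl₂ v₁ v₂ hcont₁ hcont₂ hpos₁ hpos₂ hdec₁ hdec₂ P₁ P₂
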